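/- arXiv:1401.3075 — 2 statements merged into one kernel-verified Lean document; each statement's English description precedes it below -/
import Mathlib

section
/- Let q = 2^p where 2^p - 1 is prime, and let ω ≥ 3 be an integer with q ≤ ω + 2. Then there do NOT exist elements α_1, ..., α_{ω-1}, δ_1, δ_2 in the multiplicative group of GF(q) such that δ_1 ≠ δ_2, α_j ≠ 1 for all j, and both δ_1 and δ_2 lie outside the set { γ_1 γ_2 ⋯ γ_{ω-1} : γ_j ∈ {1, α_j} for each j }. -/
/-!
The subset products of `α₁, …, αₙ` form the pointwise product `{1, α₁} * ⋯ * {1, αₙ}` in the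
group `GF(q)ˣ`, whose order `q - 1` is prime. By the Cauchy–Davenport theorem, which holds in any
group with `|G|` replaced by the least order of a nontrivial element, each factor `{1, αⱼ}`
enlarges the product by at least one element until it fills the group, so the
subset products take at least `min (q - 1) ω ≥ q - 2` values. Hence at most one nonzero element
of `GF(q)` is missed, and `δ₁ = δ₂`.
-/

open Finset Monoid Pointwise

lemma Finset.min_minOrder_le_card_prod_pair {G ι : Type*} [CommGroup G] [DecidableEq G]
    (s : Finset ι) (g : ι → G) (hg : ∀ i ∈ s, g i ≠ 1) :
    min (minOrder G) ↑(#s + 1) ≤ #(∏ i ∈ s, ({1, g i} : Finset G)) := by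
  classical
  induction s using Finset.induction_on with
  | empty => simp
  | insert a s ha ih =>
    rw [prod_insert ha, card_insert_of_notMem ha]
    have hP := ih fun i hi ↦ hg i (mem_insert_of_mem hi)
    have hCD := cauchy_davenport_minOrder_mul (insert_nonempty 1 {g a})
      (prod_induction (s := s) _ Finset.Nonempty (fun _ _ ↦ Nonempty.mul) one_nonempty
        fun i _ ↦ insert_nonempty 1 {g i})
    rw [card_pair (hg a (mem_insert_self a s)).symm] at hCD
    refine le_trans ?_ hCD
    generalize minOrder G = m at hP ⊢
    induction m using ENat.recTopCoe with
    | top => simp only [min_eq_right le_top] at hP ⊢; norm_cast at hP ⊢; omega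
    | coe m => simp only [le_min_iff, min_le_iff, Nat.cast_le] at hP ⊢; omega

lemma Monoid.natCard_le_minOrder_of_prime {G : Type*} [Group G] [Finite G]
    (hG : (Nat.card G).Prime) : (Nat.card G : ℕ∞) ≤ minOrder G := by
  refine le_minOrder.2 fun a ha _ ↦ ?_
  rw [(hG.eq_one_or_self_of_dvd _ (orderOf_dvd_natCard a)).resolve_left
    (mt orderOf_eq_one_iff.1 ha)]

lemma Units.exists_val_eq_prod_of_mem_prod_pair {M ι : Type*} [CommMonoid M] [Fintype ι]
    [DecidableEq Mˣ] (u : ι → Mˣ) {x : Mˣ} (hx : x ∈ ∏ i, ({1, u i} : Finset Mˣ)) :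
    ∃ γ : ι → M, (∀ i, γ i = 1 ∨ γ i = u i) ∧ (x : M) = ∏ i, γ i := by
  rw [← mem_coe, Finset.coe_prod, Set.mem_fintype_prod] at hx
  obtain ⟨c, hc, rfl⟩ := hx
  refine ⟨fun i ↦ c i, fun i ↦ ?_, Units.coe_prod _ _⟩
  have hci : c i = 1 ∨ c i = u i := by simpa using hc i
  rcases hci with h | h <;> simp [h]

lemma Finset.min_natCard_le_card_prod_pair_of_prime {G ι : Type*} [CommGroup G] [Finite G]
    [DecidableEq G] (hG : (Nat.card G).Prime) (s : Finset ι) (g : ι → G)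
    (hg : ∀ i ∈ s, g i ≠ 1) :
    min (Nat.card G) (#s + 1) ≤ #(∏ i ∈ s, ({1, g i} : Finset G)) := by
  simpa only [min_le_iff, Nat.cast_le] using
    (min_le_min_right _ (natCard_le_minOrder_of_prime hG)).trans
      (min_minOrder_le_card_prod_pair s g hg)

theorem stmt_1_general (p ω : ℕ) (hmp : (2 ^ p - 1).Prime)
    (hq : 2 ^ p ≤ ω + 2)
    (F : Type) [Field F] [Fintype F] (hF : Fintype.card F = 2 ^ p) :
    ¬ ∃ (α : Fin (ω - 1) → F) (δ₁ δ₂ : F),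
      (∀ j, α j ≠ 0) ∧ (∀ j, α j ≠ 1) ∧ δ₁ ≠ 0 ∧ δ₂ ≠ 0 ∧ δ₁ ≠ δ₂ ∧
      δ₁ ∉ {x : F | ∃ γ : Fin (ω - 1) → F,
        (∀ j, γ j = 1 ∨ γ j = α j) ∧ x = ∏ j, γ j} ∧
      δ₂ ∉ {x : F | ∃ γ : Fin (ω - 1) → F,
        (∀ j, γ j = 1 ∨ γ j = α j) ∧ x = ∏ j, γ j} := by
  classical
  rintro ⟨α, δ₁, δ₂, hα0, hα1, hδ₁0, hδ₂0, hδ, hδ₁, hδ₂⟩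
  have hunits : Fintype.card Fˣ = 2 ^ p - 1 := by rw [Fintype.card_units, hF]
  let S := ∏ j, ({1, Units.mk0 (α j) (hα0 j)} : Finset Fˣ)
  have hS_large : min (2 ^ p - 1) (ω - 1 + 1) ≤ #S := by
    simpa [Nat.card_eq_fintype_card, hunits] using
      min_natCard_le_card_prod_pair_of_prime (by rwa [Nat.card_eq_fintype_card, hunits]) univ
        (fun j ↦ Units.mk0 (α j) (hα0 j))
        fun j _ ↦ by simpa [Units.ext_iff] using hα1 j
  have hS_avoids : S ⊆ univ \ {Units.mk0 δ₁ hδ₁0, Units.mk0 δ₂ hδ₂0} := by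
    intro x hx
    obtain ⟨γ, hγ, hxγ⟩ := Units.exists_val_eq_prod_of_mem_prod_pair _ hx
    simp only [mem_sdiff, mem_univ, mem_insert, mem_singleton, true_and, not_or]
    exact ⟨fun h ↦ hδ₁ ⟨γ, by simpa using hγ, by rw [← hxγ, h, Units.val_mk0]⟩,
      fun h ↦ hδ₂ ⟨γ, by simpa using hγ, by rw [← hxγ, h, Units.val_mk0]⟩⟩
  have hS_small := card_le_card hS_avoids
  rw [card_sdiff_of_subset (subset_univ _), card_univ, hunits,
    card_pair fun h ↦ hδ (congrArg Units.val h)] at hS_small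
  have := hmp.two_le
  omega

theorem stmt_1 (p ω : ℕ) (hmp : (2 ^ p - 1).Prime) (hω : 3 ≤ ω)
    (hq : 2 ^ p ≤ ω + 2)
    (F : Type) [Field F] [Fintype F] (hF : Fintype.card F = 2 ^ p) :
    ¬ ∃ (α : Fin (ω - 1) → F) (δ₁ δ₂ : F),
      (∀ j, α j ≠ 0) ∧ (∀ j, α j ≠ 1) ∧ δ₁ ≠ 0 ∧ δ₂ ≠ 0 ∧ δ₁ ≠ δ₂ ∧
      δ₁ ∉ {x : F | ∃ γ : Fin (ω - 1) → F,
        (∀ j, γ j = 1 ∨ γ j = α j) ∧ x = ∏ j, γ j} ∧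
      δ₂ ∉ {x : F | ∃ γ : Fin (ω - 1) → F,
        (∀ j, γ j = 1 ∨ γ j = α j) ∧ x = ∏ j, γ j} :=
  stmt_1_general p ω hmp hq F hF
end

section
/- Let ξ be a primitive element of GF(2^p) where 2^p - 1 is prime, and let a_1, ..., a_{ω-1} be integers with 1 ≤ a_i ≤ 2^p - 2. Then the set { γ_1 γ_2 ⋯ γ_{ω-1} : γ_i ∈ {1, ξ^{a_i}} for each i } ⊆ GF(2^p)^× contains at least min(ω, 2^p - 1) elements. -/
/-!
Adding one more factor `g` to a finite set `S ∋ 1` of subset products replaces `S` by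
`S ∪ g • S`. Either this gains a new element, or `S` is stable under multiplication by `g`;
then `S` contains every power of `g`, so `#S ≥ orderOf g`. Hence each factor of order at
least `q` increases the count by one until it reaches `q`. In the theorem every `ξ ^ aᵢ` has
order exactly `2 ^ p - 1`, because that order is prime and does not divide `aᵢ`.
-/

open Finset

variable {ι M : Type*} [CommMonoid M] [DecidableEq M]

def subsetProds (s : Finset ι) (t : ι → M) : Finset M :=
  s.powerset.image fun u => ∏ i ∈ u, t i

lemma one_mem_subsetProds (s : Finset ι) (t : ι → M) : 1 ∈ subsetProds s t :=
  mem_image.mpr ⟨∅, empty_mem_powerset s, prod_empty⟩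

lemma subsetProds_insert [DecidableEq ι] {a : ι} {s : Finset ι} (ha : a ∉ s) (t : ι → M) :
    subsetProds (insert a s) t =
      subsetProds s t ∪ (subsetProds s t).image (t a * ·) := by
  rw [subsetProds, powerset_insert, image_union, image_image, subsetProds, image_image]
  congr 1
  refine image_congr fun u hu => ?_
  have hau : a ∉ u := fun h => ha (mem_powerset.mp (mem_coe.mp hu) h)
  simp only [Function.comp_apply, prod_insert hau]

lemma orderOf_le_card_of_image_mul_subset {S : Finset M} {g : M} (h1 : 1 ∈ S)
    (hS : S.image (g * ·) ⊆ S) : orderOf g ≤ #S := by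
  have hpow : ∀ k, g ^ k ∈ S := by
    intro k
    induction k with
    | zero => simpa using h1
    | succ k ih => simpa [pow_succ'] using hS (mem_image_of_mem _ ih)
  simpa using card_le_card_of_injOn (s := range (orderOf g)) (g ^ ·) (fun k _ => hpow k)
    (by simpa [Set.InjOn] using pow_injOn_Iio_orderOf (x := g))

lemma min_le_card_union_image_mul {S : Finset M} (h1 : 1 ∈ S) (g : M) :
    min (#S + 1) (orderOf g) ≤ #(S ∪ S.image (g * ·)) := by
  by_cases hS : S.image (g * ·) ⊆ S
  · rw [union_eq_left.mpr hS]
    exact (min_le_right _ _).trans (orderOf_le_card_of_image_mul_subset h1 hS)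
  · obtain ⟨y, hy, hyS⟩ := not_subset.mp hS
    calc min (#S + 1) (orderOf g) ≤ #(insert y S) := by rw [card_insert_of_notMem hyS]; omega
      _ ≤ #(S ∪ S.image (g * ·)) :=
        card_le_card (insert_subset (mem_union_right _ hy) subset_union_left)

lemma min_card_add_one_le_card_subsetProds [DecidableEq ι] {q : ℕ} (s : Finset ι) {t : ι → M}
    (ht : ∀ i ∈ s, q ≤ orderOf (t i)) : min (#s + 1) q ≤ #(subsetProds s t) := by
  induction s using Finset.induction_on with
  | empty => simpa using (min_le_left 1 q).trans (card_pos.mpr ⟨1, one_mem_subsetProds ∅ t⟩)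
  | insert a s ha ih =>
    have hs := ih fun i hi => ht i (mem_insert_of_mem hi)
    have hgrow := min_le_card_union_image_mul (one_mem_subsetProds s t) (t a)
    have hqa := ht a (mem_insert_self a s)
    rw [subsetProds_insert ha, card_insert_of_notMem ha]
    omega

lemma coe_subsetProds_univ [Fintype ι] (t : ι → M) :
    (subsetProds univ t : Set M) =
      {x | ∃ γ : ι → M, (∀ i, γ i = 1 ∨ γ i = t i) ∧ x = ∏ i, γ i} := by
  classical
  ext x
  simp only [subsetProds, coe_image, coe_powerset, Set.mem_image, Set.mem_ofPred_eq]
  constructor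
  · rintro ⟨u, -, rfl⟩
    refine ⟨fun i => if i ∈ u then t i else 1, fun i => ?_, by rw [prod_ite_mem, univ_inter]⟩
    by_cases hi : i ∈ u <;> simp [hi]
  · rintro ⟨γ, hγ, rfl⟩
    refine ⟨univ.filter (γ · ≠ 1), by simp, ?_⟩
    rw [← prod_filter_ne_one (f := γ) univ]
    exact prod_congr rfl fun i hi => ((hγ i).resolve_left (mem_filter.mp hi).2).symm

lemma orderOf_pow_of_prime {G : Type*} [Monoid G] {x : G} {a : ℕ} (hx : (orderOf x).Prime)
    (ha₀ : 0 < a) (ha : a < orderOf x) : orderOf (x ^ a) = orderOf x :=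
  Nat.Coprime.orderOf_pow <| (Nat.Prime.coprime_iff_not_dvd hx).mpr <|
    Nat.not_dvd_of_pos_of_lt ha₀ ha

theorem stmt_18_general (p ω : ℕ) (hmp : (2 ^ p - 1).Prime)
    (F : Type) [Field F]
    (ξ : F) (hξ : orderOf ξ = 2 ^ p - 1)
    (a : Fin (ω - 1) → ℕ) (ha : ∀ i, 1 ≤ a i ∧ a i ≤ 2 ^ p - 2) :
    min ω (2 ^ p - 1) ≤
      Set.ncard {x : F | ∃ γ : Fin (ω - 1) → F,
        (∀ i, γ i = 1 ∨ γ i = ξ ^ a i) ∧ x = ∏ i, γ i} := by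
  classical
  have horder : ∀ i ∈ univ, 2 ^ p - 1 ≤ orderOf (ξ ^ a i) := fun i _ => by
    have ha_lt : a i < orderOf ξ := by have := (ha i).2; have := hmp.two_le; omega
    rw [orderOf_pow_of_prime (hξ ▸ hmp) (ha i).1 ha_lt, hξ]
  have hcard := min_card_add_one_le_card_subsetProds univ horder
  rw [card_univ, Fintype.card_fin] at hcard
  rw [← coe_subsetProds_univ, Set.ncard_coe_finset]
  omega

theorem stmt_18 (p ω : ℕ) (hmp : (2 ^ p - 1).Prime)
    (F : Type) [Field F] [Fintype F] (hF : Fintype.card F = 2 ^ p)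
    (ξ : F) (hξ : orderOf ξ = 2 ^ p - 1)
    (a : Fin (ω - 1) → ℕ) (ha : ∀ i, 1 ≤ a i ∧ a i ≤ 2 ^ p - 2) :
    min ω (2 ^ p - 1) ≤
      Set.ncard {x : F | ∃ γ : Fin (ω - 1) → F,
        (∀ i, γ i = 1 ∨ γ i = ξ ^ a i) ∧ x = ∏ i, γ i} :=
  stmt_18_general p ω hmp F ξ hξ a ha
end
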